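/- Let D ⊆ ℝ^m, let p ∈ D, and let Q : D × D → ℝ satisfy Q(x, y) ≥ c‖x − y‖² for all x, y ∈ D, where c > 0. Let (x_k)_{k≥1} and (y_k)_{k≥1} be sequences in D converging to p such that liminf_{k→∞} √k·‖x_k − y_k‖ ≥ M for some M > 0. Let n ∈ ℕ, let b₀ : D × D → ℂ be continuous with b₀(p, p) ≠ 0, and let b_k : D × D → ℂ (k ≥ 1) be functions such that k^{−n} b_k converges to b₀ uniformly on some neighborhood of (p, p) in D × D. Then there exists k₀ such that for every k ≥ k₀: e^{−2k·Q(x_k, y_k)}·|b_k(x_k, y_k)|² < |b_k(y_k, y_k)|². -/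
import Mathlib


open scoped Topology

set_option maxHeartbeats 1000000 in
/-- Quantitative off-diagonal decay beats the on-diagonal value: if
`Q(x,y) ≥ c‖x-y‖²` on `D`, the sequences `x_k, y_k ∈ D` converge to `p ∈ D`
with `liminf √k‖x_k - y_k‖ ≥ M > 0`, `b₀` is continuous on `D × D` with
`b₀(p,p) ≠ 0`, and `k⁻ⁿ b_k → b₀` uniformly on a neighborhood of `(p,p)` in
`D × D`, then eventually
`e^{-2k Q(x_k,y_k)} |b_k(x_k,y_k)|² < |b_k(y_k,y_k)|²`. -/
theorem eventually_offdiag_lt_diag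
    {m : ℕ} (D : Set (EuclideanSpace ℝ (Fin m)))
    (p : EuclideanSpace ℝ (Fin m)) (hp : p ∈ D)
    (Q : EuclideanSpace ℝ (Fin m) → EuclideanSpace ℝ (Fin m) → ℝ)
    (c : ℝ) (hc : 0 < c)
    (hQ : ∀ x ∈ D, ∀ y ∈ D, c * ‖x - y‖ ^ 2 ≤ Q x y)
    (x y : ℕ → EuclideanSpace ℝ (Fin m))
    (hxD : ∀ k, x k ∈ D) (hyD : ∀ k, y k ∈ D)
    (hx : Filter.Tendsto x Filter.atTop (𝓝 p))
    (hy : Filter.Tendsto y Filter.atTop (𝓝 p))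
    (M : ℝ) (hM : 0 < M)
    (hliminf : (M : EReal) ≤
      Filter.liminf
        (fun k : ℕ => ((Real.sqrt k * ‖x k - y k‖ : ℝ) : EReal))
        Filter.atTop)
    (n : ℕ)
    (b₀ : EuclideanSpace ℝ (Fin m) → EuclideanSpace ℝ (Fin m) → ℂ)
    (hb₀cont : ContinuousOn (fun q : EuclideanSpace ℝ (Fin m) ×
      EuclideanSpace ℝ (Fin m) => b₀ q.1 q.2) (D ×ˢ D))
    (hb₀ne : b₀ p p ≠ 0)
    (b : ℕ → EuclideanSpace ℝ (Fin m) → EuclideanSpace ℝ (Fin m) → ℂ)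
    (hunif : ∃ U ∈ 𝓝 (p, p), TendstoUniformlyOn
      (fun (k : ℕ) (q : EuclideanSpace ℝ (Fin m) × EuclideanSpace ℝ (Fin m)) =>
        (k : ℂ) ^ (-(n : ℤ)) * b k q.1 q.2)
      (fun q => b₀ q.1 q.2) Filter.atTop (U ∩ D ×ˢ D)) :
    ∃ k₀ : ℕ, ∀ k ≥ k₀,
      Real.exp (-2 * k * Q (x k) (y k)) * ‖b k (x k) (y k)‖ ^ 2
        < ‖b k (y k) (y k)‖ ^ 2 := by
  classical
  obtain ⟨U, hU, huc⟩ := hunif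
  set ε : ℝ := ‖b₀ p p‖ with hεdef
  have hε : 0 < ε := norm_pos_iff.mpr hb₀ne
  set t : ℝ := Real.exp (-(c * M ^ 2) / 4) with htdef
  have ht0 : 0 < t := Real.exp_pos _
  have ht1 : t < 1 := by
    have hneg : -(c * M ^ 2) / 4 < 0 := by nlinarith [mul_pos hc (pow_pos hM 2)]
    calc t = Real.exp (-(c * M ^ 2) / 4) := rfl
    _ < Real.exp 0 := Real.exp_lt_exp.mpr hneg
    _ = 1 := Real.exp_zero
  have h1t : 0 < 1 - t := by linarith
  set δ : ℝ := ε * (1 - t) / (2 * (1 + t)) with hδdef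
  have hδ : 0 < δ := div_pos (mul_pos hε h1t) (by linarith)
  have hδeq : δ * (2 * (1 + t)) = ε * (1 - t) := by
    rw [hδdef]; field_simp
  have hδlt : δ < ε := by nlinarith [mul_pos hε ht0, mul_pos hδ ht0]
  have hεδ : 0 < ε - δ := by linarith
  have hkey : t * (ε + δ) < ε - δ := by
    nlinarith [mul_lt_mul_of_pos_left ht1 hε, mul_pos hδ ht0]
  -- convergence of the pair sequences
  have hxy2 : Filter.Tendsto (fun k => (x k, y k)) Filter.atTop (𝓝 (p, p)) :=
    hx.prodMk_nhds hy
  have hyy2 : Filter.Tendsto (fun k => (y k, y k)) Filter.atTop (𝓝 (p, p)) :=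
    hy.prodMk_nhds hy
  have hxyD : ∀ k, ((x k, y k) : _ × _) ∈ D ×ˢ D := fun k => ⟨hxD k, hyD k⟩
  have hyyD : ∀ k, ((y k, y k) : _ × _) ∈ D ×ˢ D := fun k => ⟨hyD k, hyD k⟩
  have hcw : ContinuousWithinAt
      (fun q : EuclideanSpace ℝ (Fin m) × EuclideanSpace ℝ (Fin m) => b₀ q.1 q.2)
      (D ×ˢ D) (p, p) := hb₀cont (p, p) ⟨hp, hp⟩
  have hb₀x : Filter.Tendsto (fun k => b₀ (x k) (y k)) Filter.atTop (𝓝 (b₀ p p)) :=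
    hcw.tendsto.comp (tendsto_nhdsWithin_of_tendsto_nhds_of_eventually_within _
      hxy2 (Filter.Eventually.of_forall hxyD))
  have hb₀y : Filter.Tendsto (fun k => b₀ (y k) (y k)) Filter.atTop (𝓝 (b₀ p p)) :=
    hcw.tendsto.comp (tendsto_nhdsWithin_of_tendsto_nhds_of_eventually_within _
      hyy2 (Filter.Eventually.of_forall hyyD))
  have hEx : ∀ᶠ k in Filter.atTop, ‖b₀ (x k) (y k)‖ < ε + δ / 2 :=
    hb₀x.norm.eventually_lt_const (by linarith)
  have hEy : ∀ᶠ k in Filter.atTop, ε - δ / 2 < ‖b₀ (y k) (y k)‖ :=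
    hb₀y.norm.eventually_const_lt (by linarith)
  have hEU : ∀ᶠ k in Filter.atTop, ((x k, y k) : _ × _) ∈ U :=
    hxy2.eventually_mem hU
  have hEU' : ∀ᶠ k in Filter.atTop, ((y k, y k) : _ × _) ∈ U :=
    hyy2.eventually_mem hU
  have hEd : ∀ᶠ k : ℕ in Filter.atTop, ∀ q ∈ U ∩ D ×ˢ D,
      dist (b₀ q.1 q.2) ((k : ℂ) ^ (-(n : ℤ)) * b k q.1 q.2) < δ / 2 :=
    Metric.tendstoUniformlyOn_iff.mp huc (δ / 2) (by linarith)
  have hEs : ∀ᶠ k : ℕ in Filter.atTop, M / 2 < Real.sqrt (k : ℕ) * ‖x k - y k‖ := by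
    have hlt : ((M / 2 : ℝ) : EReal) <
        Filter.liminf (fun k : ℕ => ((Real.sqrt k * ‖x k - y k‖ : ℝ) : EReal))
          Filter.atTop :=
      lt_of_lt_of_le (EReal.coe_lt_coe_iff.mpr (by linarith)) hliminf
    filter_upwards [Filter.eventually_lt_of_lt_liminf hlt] with k hk
    exact_mod_cast hk
  have hEk : ∀ᶠ k in Filter.atTop, 1 ≤ k := Filter.eventually_ge_atTop 1
  rw [Filter.eventually_atTop] at hEx hEy hEU hEU' hEd hEs hEk
  obtain ⟨k₁, h1⟩ := hEx; obtain ⟨k₂, h2⟩ := hEy; obtain ⟨k₃, h3⟩ := hEU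
  obtain ⟨k₄, h4⟩ := hEU'; obtain ⟨k₅, h5⟩ := hEd; obtain ⟨k₆, h6⟩ := hEs
  obtain ⟨k₇, h7⟩ := hEk
  refine ⟨max (max (max k₁ k₂) (max k₃ k₄)) (max (max k₅ k₆) k₇), fun k hk => ?_⟩
  simp only [ge_iff_le, max_le_iff] at hk
  obtain ⟨⟨⟨hk1, hk2⟩, hk3, hk4⟩, ⟨hk5, hk6⟩, hk7⟩ := hk
  have hb1 := h1 k hk1
  have hb2 := h2 k hk2
  have hU1 := h3 k hk3
  have hU2 := h4 k hk4
  have hd := h5 k hk5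
  have hs := h6 k hk6
  have hk1' := h7 k hk7
  have hkpos : (0 : ℝ) < (k : ℝ) := by exact_mod_cast hk1'
  -- exponential bound
  have hQk : c * ‖x k - y k‖ ^ 2 ≤ Q (x k) (y k) := hQ _ (hxD k) _ (hyD k)
  have hknorm : (M / 2) ^ 2 ≤ (k : ℝ) * ‖x k - y k‖ ^ 2 := by
    have h' : (M / 2) ^ 2 ≤ (Real.sqrt k * ‖x k - y k‖) ^ 2 :=
      pow_le_pow_left₀ (by linarith) hs.le 2
    rwa [mul_pow, Real.sq_sqrt (Nat.cast_nonneg k)] at h'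
  have hexp : Real.exp (-2 * k * Q (x k) (y k)) ≤ t ^ 2 := by
    have ht2 : t ^ 2 = Real.exp (-(c * M ^ 2) / 2) := by
      rw [htdef, sq, ← Real.exp_add]; ring_nf
    rw [ht2]
    apply Real.exp_le_exp.mpr
    nlinarith [mul_le_mul_of_nonneg_left hQk (by positivity : (0:ℝ) ≤ 2 * (k : ℝ)),
      mul_le_mul_of_nonneg_left hknorm hc.le]
  -- norm bounds on the scaled amplitudes
  have hd1 := hd (x k, y k) ⟨hU1, hxyD k⟩
  have hd2 := hd (y k, y k) ⟨hU2, hyyD k⟩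
  set u : ℝ := ‖(k : ℂ) ^ (-(n : ℤ)) * b k (x k) (y k)‖ with hudef
  set v : ℝ := ‖(k : ℂ) ^ (-(n : ℤ)) * b k (y k) (y k)‖ with hvdef
  have hu : u < ε + δ := by
    have := norm_le_norm_add_norm_sub' ((k : ℂ) ^ (-(n : ℤ)) * b k (x k) (y k))
      (b₀ (x k) (y k))
    rw [dist_eq_norm] at hd1
    have hns : ‖(k : ℂ) ^ (-(n : ℤ)) * b k (x k) (y k) - b₀ (x k) (y k)‖ < δ / 2 := by
      rwa [norm_sub_rev]
    calc u ≤ ‖b₀ (x k) (y k)‖ + ‖(k : ℂ) ^ (-(n : ℤ)) * b k (x k) (y k) - b₀ (x k) (y k)‖ := this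
    _ < (ε + δ / 2) + δ / 2 := by linarith
    _ = ε + δ := by ring
  have hv : ε - δ < v := by
    rw [dist_eq_norm] at hd2
    have := norm_le_norm_add_norm_sub' (b₀ (y k) (y k))
      ((k : ℂ) ^ (-(n : ℤ)) * b k (y k) (y k))
    have : ‖b₀ (y k) (y k)‖ ≤ v + ‖b₀ (y k) (y k) - (k : ℂ) ^ (-(n : ℤ)) * b k (y k) (y k)‖ := this
    linarith
  have hu0 : 0 ≤ u := norm_nonneg _
  -- key squared inequality
  have hfin : Real.exp (-2 * k * Q (x k) (y k)) * u ^ 2 < v ^ 2 := by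
    have h1 : Real.exp (-2 * k * Q (x k) (y k)) * u ^ 2 ≤ (t * (ε + δ)) ^ 2 := by
      have hu2 : u ^ 2 ≤ (ε + δ) ^ 2 := pow_le_pow_left₀ hu0 hu.le 2
      have e1 : Real.exp (-2 * k * Q (x k) (y k)) * u ^ 2 ≤ t ^ 2 * u ^ 2 :=
        mul_le_mul_of_nonneg_right hexp (sq_nonneg u)
      have e2 : t ^ 2 * u ^ 2 ≤ t ^ 2 * (ε + δ) ^ 2 :=
        mul_le_mul_of_nonneg_left hu2 (sq_nonneg t)
      rw [mul_pow]
      linarith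
    have h2 : (t * (ε + δ)) ^ 2 < (ε - δ) ^ 2 :=
      pow_lt_pow_left₀ hkey (by positivity) (by norm_num)
    have h3 : (ε - δ) ^ 2 < v ^ 2 :=
      pow_lt_pow_left₀ hv hεδ.le (by norm_num)
    linarith
  -- unscale
  set K : ℝ := ((k : ℝ) ^ n)⁻¹ with hKdef
  have hK : 0 < K := by positivity
  have hnu : u = K * ‖b k (x k) (y k)‖ := by
    rw [hudef, norm_mul, norm_zpow, Complex.norm_natCast, zpow_neg, zpow_natCast]
  have hnv : v = K * ‖b k (y k) (y k)‖ := by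
    rw [hvdef, norm_mul, norm_zpow, Complex.norm_natCast, zpow_neg, zpow_natCast]
  rw [hnu, hnv, mul_pow, mul_pow, mul_left_comm] at hfin
  exact lt_of_mul_lt_mul_left hfin (sq_nonneg K)
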